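/- arXiv:2312.01282 — 5 statements merged into one kernel-verified Lean document; each statement's English description precedes it below -/
import Mathlib

section
/- If A is an n×n real matrix all of whose entries have absolute value at most a, then |det A| ≤ (√n · a)^n. -/
/-!
The Gram matrix `Aᵀ * A` is positive semidefinite with determinant `(det A)²`, so its
eigenvalues are nonnegative with product `(det A)²`. Their sum is the trace `∑ᵢⱼ Aᵢⱼ² ≤ n² a²`,
and AM–GM bounds the product by `(n a²)ⁿ = ((√n · a)ⁿ)²`.
-/

open Finset Matrix

theorem Real.prod_le_mean_pow {ι : Type*} (s : Finset ι) {z : ι → ℝ}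
    (hz : ∀ i ∈ s, 0 ≤ z i) : ∏ i ∈ s, z i ≤ ((∑ i ∈ s, z i) / #s) ^ #s := by
  rcases s.eq_empty_or_nonempty with rfl | hs
  · simp
  have amgm :=
    Real.geom_mean_le_arith_mean s (fun _ ↦ 1) z (by simp) (by simpa using hs.card_pos) hz
  simp only [Real.rpow_one, one_mul, sum_const, nsmul_eq_mul, mul_one] at amgm
  calc ∏ i ∈ s, z i = ((∏ i ∈ s, z i) ^ (#s : ℝ)⁻¹) ^ #s :=
        (Real.rpow_inv_natCast_pow (prod_nonneg hz) hs.card_pos.ne').symm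
    _ ≤ ((∑ i ∈ s, z i) / #s) ^ #s :=
        pow_le_pow_left₀ (Real.rpow_nonneg (prod_nonneg hz) _) amgm _

theorem Matrix.PosSemidef.det_le_trace_div_card_pow {n : Type*} [Fintype n] [DecidableEq n]
    {B : Matrix n n ℝ} (hB : B.PosSemidef) :
    B.det ≤ (B.trace / Fintype.card n) ^ Fintype.card n := by
  rw [hB.isHermitian.det_eq_prod_eigenvalues, hB.isHermitian.trace_eq_sum_eigenvalues]
  simpa using Real.prod_le_mean_pow univ fun i _ ↦ hB.eigenvalues_nonneg i

theorem Matrix.trace_transpose_mul_self {m n : Type*} [Fintype m] [Fintype n]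
    (A : Matrix m n ℝ) : (Aᵀ * A).trace = ∑ i, ∑ j, A i j ^ 2 := by
  simp only [trace, diag, mul_apply, transpose_apply, sq]
  exact sum_comm

theorem Matrix.trace_transpose_mul_self_le {m n : Type*} [Fintype m] [Fintype n]
    {A : Matrix m n ℝ} {a : ℝ} (h : ∀ i j, |A i j| ≤ a) :
    (Aᵀ * A).trace ≤ Fintype.card m * Fintype.card n * a ^ 2 := by
  rw [trace_transpose_mul_self]
  calc ∑ i, ∑ j, A i j ^ 2 ≤ ∑ _i : m, ∑ _j : n, a ^ 2 :=
        sum_le_sum fun i _ ↦ sum_le_sum fun j _ ↦ sq_le_sq.2 ((h i j).trans (le_abs_self a))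
    _ = Fintype.card m * Fintype.card n * a ^ 2 := by simp [mul_assoc]

theorem hadamard_entrywise (n : ℕ) (a : ℝ) (A : Matrix (Fin n) (Fin n) ℝ)
    (h : ∀ i j, |A i j| ≤ a) :
    |A.det| ≤ (Real.sqrt n * a)^n := by
  obtain rfl | hn := n.eq_zero_or_pos
  · simp
  have ha : 0 ≤ a := (abs_nonneg _).trans (h ⟨0, hn⟩ ⟨0, hn⟩)
  have hgram : (Aᵀ * A).PosSemidef := by simpa using posSemidef_conjTranspose_mul_self A
  have htrace : (Aᵀ * A).trace / n ≤ n * a ^ 2 := by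
    rw [div_le_iff₀ (by positivity)]
    simpa [mul_right_comm] using trace_transpose_mul_self_le h
  have hsq : A.det ^ 2 ≤ ((Real.sqrt n * a) ^ n) ^ 2 := calc
    A.det ^ 2 = (Aᵀ * A).det := by rw [det_mul, det_transpose, sq]
    _ ≤ ((Aᵀ * A).trace / n) ^ n := by simpa using hgram.det_le_trace_div_card_pow
    _ ≤ (n * a ^ 2) ^ n :=
      pow_le_pow_left₀ (div_nonneg hgram.trace_nonneg n.cast_nonneg) htrace n
    _ = ((Real.sqrt n * a) ^ n) ^ 2 := by
      rw [← pow_mul, mul_comm n 2, pow_mul, mul_pow (Real.sqrt n), Real.sq_sqrt n.cast_nonneg]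
  exact abs_le_of_sq_le_sq hsq (by positivity)
end

section
/- Let t > 4 be real, and let α₁₂ = arccos(√(3(t+4)) / ((t-2)√(t+2))), α₂₄ = arccos(√(3(t-4)) / ((t+2)√(t-2))), and α₂₃ = arccos((t² - 28)/((t-2)(t+2))). Then cos(2α₁₂ + 2α₂₄) = (t² - 28)/((t-2)(t+2)) = cos(α₂₃). -/
open Real

set_option maxHeartbeats 1600000 in
theorem new_family_double_angle (t : ℝ) (ht : 4 < t)
    (α₁₂ α₂₄ α₂₃ : ℝ)
    (h12 : α₁₂ = arccos (Real.sqrt (3*(t+4)) / ((t-2) * Real.sqrt (t+2))))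
    (h24 : α₂₄ = arccos (Real.sqrt (3*(t-4)) / ((t+2) * Real.sqrt (t-2))))
    (h23 : α₂₃ = arccos ((t^2 - 28) / ((t-2)*(t+2)))) :
    Real.cos (2*α₁₂ + 2*α₂₄) = (t^2 - 28) / ((t-2)*(t+2)) ∧
    Real.cos (2*α₁₂ + 2*α₂₄) = Real.cos α₂₃ := by
  have h2 : (0:ℝ) < t - 2 := by linarith
  have h2' : (0:ℝ) < t + 2 := by linarith
  have h4 : (0:ℝ) < t - 4 := by linarith
  have h4' : (0:ℝ) < t + 4 := by linarith
  set x := Real.sqrt (3*(t+4)) / ((t-2) * Real.sqrt (t+2)) with hxdef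
  set y := Real.sqrt (3*(t-4)) / ((t+2) * Real.sqrt (t-2)) with hydef
  have hsq2 : Real.sqrt (t+2) ^ 2 = t + 2 := Real.sq_sqrt (by linarith)
  have hsq2' : Real.sqrt (t-2) ^ 2 = t - 2 := Real.sq_sqrt (by linarith)
  have hx2 : x ^ 2 = 3*(t+4) / ((t-2)^2 * (t+2)) := by
    rw [hxdef, div_pow, mul_pow, hsq2, Real.sq_sqrt (by linarith)]
  have hy2 : y ^ 2 = 3*(t-4) / ((t+2)^2 * (t-2)) := by
    rw [hydef, div_pow, mul_pow, hsq2', Real.sq_sqrt (by linarith)]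
  have hx0 : 0 ≤ x := by
    apply div_nonneg (Real.sqrt_nonneg _)
    positivity
  have hy0 : 0 ≤ y := by
    apply div_nonneg (Real.sqrt_nonneg _)
    positivity
  have hx2le : x ^ 2 ≤ 1 := by
    rw [hx2, div_le_one (by positivity)]
    nlinarith [sq_nonneg (t+1)]
  have hy2le : y ^ 2 ≤ 1 := by
    rw [hy2, div_le_one (by positivity)]
    nlinarith [sq_nonneg (t-1)]
  have hx1 : x ≤ 1 := by nlinarith [sq_nonneg (x - 1)]
  have hy1 : y ≤ 1 := by nlinarith [sq_nonneg (y - 1)]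
  have hcx : Real.cos α₁₂ = x := by rw [h12, Real.cos_arccos (by linarith) hx1]
  have hcy : Real.cos α₂₄ = y := by rw [h24, Real.cos_arccos (by linarith) hy1]
  have hsx : Real.sin α₁₂ = Real.sqrt (1 - x ^ 2) := by rw [h12, Real.sin_arccos]
  have hsy : Real.sin α₂₄ = Real.sqrt (1 - y ^ 2) := by rw [h24, Real.sin_arccos]
  have e1 : Real.sqrt (1 - x ^ 2) * x = Real.sqrt ((1 - x ^ 2) * x ^ 2) := by
    rw [Real.sqrt_mul (by linarith), Real.sqrt_sq hx0]
  have e2 : Real.sqrt (1 - y ^ 2) * y = Real.sqrt ((1 - y ^ 2) * y ^ 2) := by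
    rw [Real.sqrt_mul (by linarith), Real.sqrt_sq hy0]
  have key : Real.sqrt (1 - x ^ 2) * x * (Real.sqrt (1 - y ^ 2) * y)
      = 3*(t+4)*(t-4)*(t+1)*(t-1) / ((t-2)^3 * (t+2)^3) := by
    rw [e1, e2, ← Real.sqrt_mul (by nlinarith : (0:ℝ) ≤ (1 - x ^ 2) * x ^ 2)]
    rw [show (1 - x ^ 2) * x ^ 2 * ((1 - y ^ 2) * y ^ 2)
        = (3*(t+4)*(t-4)*(t+1)*(t-1) / ((t-2)^3 * (t+2)^3)) ^ 2 by
      rw [hx2, hy2]; field_simp; ring]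
    have hnum : (0:ℝ) < 3*(t+4)*(t-4)*(t+1)*(t-1) :=
      mul_pos (mul_pos (mul_pos (mul_pos (by norm_num : (0:ℝ) < 3) h4') h4)
        (by linarith : (0:ℝ) < t+1)) (by linarith : (0:ℝ) < t-1)
    exact Real.sqrt_sq (div_nonneg hnum.le (by positivity))
  have final : (2*x^2 - 1) * (2*y^2 - 1)
      - 4 * (Real.sqrt (1 - x ^ 2) * x * (Real.sqrt (1 - y ^ 2) * y))
      = (t^2 - 28) / ((t-2)*(t+2)) := by
    rw [key, hx2, hy2]
    field_simp
    ring
  have hmain : Real.cos (2*α₁₂ + 2*α₂₄) = (t^2 - 28) / ((t-2)*(t+2)) := by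
    rw [Real.cos_add, Real.cos_two_mul, Real.cos_two_mul, Real.sin_two_mul,
      Real.sin_two_mul, hcx, hcy, hsx, hsy]
    linear_combination final
  refine ⟨hmain, ?_⟩
  have hb1 : -1 ≤ (t^2 - 28) / ((t-2)*(t+2)) := by
    rw [le_div_iff₀ (by positivity)]; nlinarith
  have hb2 : (t^2 - 28) / ((t-2)*(t+2)) ≤ 1 := by
    rw [div_le_one (by positivity)]; nlinarith
  rw [hmain, h23, Real.cos_arccos hb1 hb2]
end

section
/- Let t > 4 be real, and define α₁₂ = arccos(√(3(t+4))/((t-2)√(t+2))), α₂₄ = arccos(√(3(t-4))/((t+2)√(t-2))), α₁₄ = arccos((t²-28)/((t-2)(t+2))) and α₂₃ = arccos(√((t-4)(t+4)) / (2√((t-2)(t+2)))). Then 2α₁₂ + 2α₂₄ + α₁₄ = 2π and α₁₂ - α₂₄ + 3α₂₃ = π. -/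
set_option maxHeartbeats 1000000

open Real

private lemma arccos_anti' : Antitone Real.arccos := fun a b h => by
  rw [Real.arccos_eq_pi_div_two_sub_arcsin, Real.arccos_eq_pi_div_two_sub_arcsin]
  linarith [Real.monotone_arcsin h]

private lemma ineq1 (t : ℝ) (ht : 4 < t) : 3*(t+4) ≤ (t-2)^2*(t+2) := by
  nlinarith [sq_nonneg (t+1)]

private lemma ineq2 (t : ℝ) (ht : 4 < t) : 3*(t-4) ≤ (t+2)^2*(t-2) := by
  nlinarith [sq_nonneg (t-1)]

private lemma ineq3 (t : ℝ) (ht : 4 < t) : (t-4)*(t+4) ≤ (t-2)*(t+2) := by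
  nlinarith

private lemma ineq4 (t : ℝ) (ht : 4 < t) :
    3*(t-4)*((t-2)^2*(t+2)) ≤ 3*(t+4)*((t+2)^2*(t-2)) := by
  nlinarith [sq_nonneg t]

theorem new_family_angle_relations (t : ℝ) (ht : 4 < t)
    (α₁₂ α₂₄ α₁₄ α₂₃ : ℝ)
    (h12 : α₁₂ = arccos (Real.sqrt (3*(t+4)) / ((t-2) * Real.sqrt (t+2))))
    (h24 : α₂₄ = arccos (Real.sqrt (3*(t-4)) / ((t+2) * Real.sqrt (t-2))))
    (h14 : α₁₄ = arccos ((t^2 - 28) / ((t-2)*(t+2))))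
    (h23 : α₂₃ = arccos (Real.sqrt ((t-4)*(t+4)) / (2 * Real.sqrt ((t-2)*(t+2))))) :
    2*α₁₂ + 2*α₂₄ + α₁₄ = 2*π ∧ α₁₂ - α₂₄ + 3*α₂₃ = π := by
  have h2 : (0:ℝ) < t - 2 := by linarith
  have h2' : (0:ℝ) < t + 2 := by linarith
  have h4 : (0:ℝ) < t - 4 := by linarith
  have h4' : (0:ℝ) < t + 4 := by linarith
  obtain ⟨p, hpdef⟩ : ∃ x, Real.sqrt (t+2) = x := ⟨_, rfl⟩
  obtain ⟨q, hqdef⟩ : ∃ x, Real.sqrt (t-2) = x := ⟨_, rfl⟩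
  obtain ⟨r, hrdef⟩ : ∃ x, Real.sqrt (t+4) = x := ⟨_, rfl⟩
  obtain ⟨s, hsdef⟩ : ∃ x, Real.sqrt (t-4) = x := ⟨_, rfl⟩
  obtain ⟨w, hwdef⟩ : ∃ x, Real.sqrt 3 = x := ⟨_, rfl⟩
  have hp0 : 0 < p := hpdef ▸ Real.sqrt_pos.2 h2'
  have hq0 : 0 < q := hqdef ▸ Real.sqrt_pos.2 h2
  have hr0 : 0 < r := hrdef ▸ Real.sqrt_pos.2 h4'
  have hs0 : 0 < s := hsdef ▸ Real.sqrt_pos.2 h4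
  have hw0 : 0 < w := hwdef ▸ Real.sqrt_pos.2 (by norm_num)
  have hp2 : p^2 = t+2 := hpdef ▸ Real.sq_sqrt h2'.le
  have hq2 : q^2 = t-2 := hqdef ▸ Real.sq_sqrt h2.le
  have hr2 : r^2 = t+4 := hrdef ▸ Real.sq_sqrt h4'.le
  have hs2 : s^2 = t-4 := hsdef ▸ Real.sq_sqrt h4.le
  have hw2 : w^2 = 3 := hwdef ▸ Real.sq_sqrt (by norm_num)
  rw [Real.sqrt_mul (by norm_num : (0:ℝ) ≤ 3), hwdef, hrdef, hpdef] at h12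
  rw [Real.sqrt_mul (by norm_num : (0:ℝ) ≤ 3), hwdef, hsdef, hqdef] at h24
  rw [Real.sqrt_mul h4.le, Real.sqrt_mul h2.le, hsdef, hrdef, hqdef, hpdef] at h23
  have hm1 : ∀ x : ℝ, 0 ≤ x → -1 ≤ x := fun x hx => by linarith
  -- upper bounds on the cosines
  have cA_le : w*r/((t-2)*p) ≤ 1 := by
    rw [div_le_one (by positivity)]
    have e1 : (w*r)^2 = 3*(t+4) := by rw [mul_pow, hw2, hr2]
    have e2 : ((t-2)*p)^2 = (t-2)^2*(t+2) := by rw [mul_pow, hp2]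
    have hsq : (w*r)^2 ≤ ((t-2)*p)^2 := by rw [e1, e2]; exact ineq1 t ht
    exact (pow_le_pow_iff_left₀ (by positivity) (by positivity) two_ne_zero).1 hsq
  have cB_le : w*s/((t+2)*q) ≤ 1 := by
    rw [div_le_one (by positivity)]
    have e1 : (w*s)^2 = 3*(t-4) := by rw [mul_pow, hw2, hs2]
    have e2 : ((t+2)*q)^2 = (t+2)^2*(t-2) := by rw [mul_pow, hq2]
    have hsq : (w*s)^2 ≤ ((t+2)*q)^2 := by rw [e1, e2]; exact ineq2 t ht
    exact (pow_le_pow_iff_left₀ (by positivity) (by positivity) two_ne_zero).1 hsq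
  have cC_le : s*r/(2*(q*p)) ≤ 1/2 := by
    rw [div_le_div_iff₀ (by positivity) (by norm_num)]
    have e1 : (s*r)^2 = (t-4)*(t+4) := by rw [mul_pow, hs2, hr2]
    have e2 : (q*p)^2 = (t-2)*(t+2) := by rw [mul_pow, hq2, hp2]
    have hsq : (s*r)^2 ≤ (q*p)^2 := by rw [e1, e2]; exact ineq3 t ht
    have := (pow_le_pow_iff_left₀ (by positivity) (by positivity) two_ne_zero).1 hsq
    linarith
  -- cosine and sine values of the angles
  have hcA : Real.cos α₁₂ = w*r/((t-2)*p) := by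
    rw [h12, Real.cos_arccos (hm1 _ (by positivity)) cA_le]
  have hcB : Real.cos α₂₄ = w*s/((t+2)*q) := by
    rw [h24, Real.cos_arccos (hm1 _ (by positivity)) cB_le]
  have hcC : Real.cos α₂₃ = s*r/(2*(q*p)) := by
    rw [h23, Real.cos_arccos (hm1 _ (by positivity)) (by linarith)]
  have hsA : Real.sin α₁₂ = (t+1)*s/((t-2)*p) := by
    rw [h12, Real.sin_arccos,
      show 1 - (w*r/((t-2)*p))^2 = ((t+1)*s/((t-2)*p))^2 by
        field_simp
        linear_combination (t-2)^2*hp2 - r^2*hw2 - 3*hr2 - (t+1)^2*hs2]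
    exact Real.sqrt_sq (by positivity)
  have hsB : Real.sin α₂₄ = (t-1)*r/((t+2)*q) := by
    rw [h24, Real.sin_arccos,
      show 1 - (w*s/((t+2)*q))^2 = ((t-1)*r/((t+2)*q))^2 by
        field_simp
        linear_combination (t+2)^2*hq2 - s^2*hw2 - 3*hs2 - (t-1)^2*hr2]
    exact Real.sqrt_sq (div_nonneg (mul_nonneg (by linarith) hr0.le) (by positivity))
  -- basic range facts
  have hA0 : 0 ≤ α₁₂ := h12 ▸ Real.arccos_nonneg _
  have hB0 : 0 ≤ α₂₄ := h24 ▸ Real.arccos_nonneg _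
  have hC0 : 0 ≤ α₂₃ := h23 ▸ Real.arccos_nonneg _
  have hAhalf : α₁₂ ≤ π/2 := by
    rw [h12]; exact Real.arccos_le_pi_div_two.2 (by positivity)
  have hBhalf : α₂₄ ≤ π/2 := by
    rw [h24]; exact Real.arccos_le_pi_div_two.2 (by positivity)
  have hChalf : α₂₃ ≤ π/2 := by
    rw [h23]; exact Real.arccos_le_pi_div_two.2 (by positivity)
  -- cosine of the sum
  have hcosAB : Real.cos (α₁₂ + α₂₄) = -(s*r)/(q*p) := by
    rw [Real.cos_add, hcA, hcB, hsA, hsB]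
    field_simp
    linear_combination hw2
  have hABge : π/2 ≤ α₁₂ + α₂₄ := by
    by_contra hcon
    push_neg at hcon
    have h0 : 0 < Real.cos (α₁₂ + α₂₄) :=
      Real.cos_pos_of_mem_Ioo ⟨by linarith [Real.pi_pos], hcon⟩
    rw [hcosAB, neg_div] at h0
    have hpos : 0 < (s*r)/(q*p) := by positivity
    linarith
  -- first relation
  have hcc : Real.cos (2*(α₁₂ + α₂₄)) = (t^2 - 28) / ((t-2)*(t+2)) := by
    rw [Real.cos_two_mul, hcosAB]
    field_simp
    linear_combination -((2*t^2-32)*p^2*hq2 + (2*t^2-32)*(t-2)*hp2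
      + (8-2*t^2)*r^2*hs2 + (8-2*t^2)*(t-4)*hr2)
  have key1 : α₁₄ = 2*π - 2*(α₁₂ + α₂₄) := by
    have hx : (t^2 - 28) / ((t-2)*(t+2)) = Real.cos (2*π - 2*(α₁₂ + α₂₄)) := by
      rw [Real.cos_sub, Real.cos_two_pi, Real.sin_two_pi, hcc]; ring
    rw [h14, hx, Real.arccos_cos (by linarith) (by linarith)]
  -- second relation
  have hAleB : α₁₂ ≤ α₂₄ := by
    rw [h12, h24]
    apply arccos_anti'
    have e1 : (w*s/((t+2)*q))^2 = 3*(t-4)/((t+2)^2*(t-2)) := by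
      rw [div_pow, mul_pow, mul_pow, hw2, hs2, hq2]
    have e2 : (w*r/((t-2)*p))^2 = 3*(t+4)/((t-2)^2*(t+2)) := by
      rw [div_pow, mul_pow, mul_pow, hw2, hr2, hp2]
    have hsq : (w*s/((t+2)*q))^2 ≤ (w*r/((t-2)*p))^2 := by
      rw [e1, e2, div_le_div_iff₀ (by positivity) (by positivity)]
      exact ineq4 t ht
    exact (pow_le_pow_iff_left₀ (by positivity) (by positivity) two_ne_zero).1 hsq
  have hCge : π/3 ≤ α₂₃ := by
    have harc : Real.arccos (1/2) = π/3 := by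
      rw [← Real.cos_pi_div_three, Real.arccos_cos (by positivity) (by linarith [Real.pi_pos])]
    calc π/3 = Real.arccos (1/2) := harc.symm
      _ ≤ α₂₃ := by rw [h23]; exact arccos_anti' (by linarith)
  have key2 : 2*π - 3*α₂₃ = π + (α₁₂ - α₂₄) := by
    apply Real.injOn_cos (Set.mem_Icc.2 ⟨by linarith, by linarith⟩)
      (Set.mem_Icc.2 ⟨by linarith, by linarith [Real.pi_pos]⟩)
    have lhs : Real.cos (2*π - 3*α₂₃) = Real.cos (3*α₂₃) := by
      rw [Real.cos_sub, Real.cos_two_pi, Real.sin_two_pi]; ring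
    have rhs : Real.cos (π + (α₁₂ - α₂₄)) = -Real.cos (α₁₂ - α₂₄) := by
      rw [Real.cos_add, Real.cos_pi, Real.sin_pi]; ring
    rw [lhs, rhs, Real.cos_three_mul, hcC, Real.cos_sub, hcA, hcB, hsA, hsB]
    field_simp
    linear_combination 8*q^2*p^2*hw2 + 4*(t^2-4)*(r^2*hs2+(t-4)*hr2)
      + (64-4*t^2)*(p^2*hq2+(t-2)*hp2)
  exact ⟨by linarith, by linarith⟩
end

section
/- The elliptic curve E : y² = x³ - 9x² - 36x + 324 over ℚ has infinitely many rational points. -/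
/-!
For a curve `y² = x³ + a₂x² + a₄x + a₆` and a nonarchimedean absolute value with `|2| < 1`
and `|a₂|, |a₄| ≤ 1`, the tangent construction sends a point with `|x| = t²`, `|y| = t³`, `t > 1`,
to one with `|x| = (t / |2|)²`, `|y| = (t / |2|)³`, because `3x²` dominates the numerator of the
slope and `ℓ²` dominates the new `x`. So the points `2ⁿP` have strictly growing `|x|` and are
pairwise distinct. On `E`, the point `(265/16, -2717/64)` has `2`-adic `|x| = 4²`, `|y| = 4³`.
-/

namespace WeierstrassCurve.Affine

variable {F : Type*} [Field F] {W : WeierstrassCurve.Affine F}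

lemma negY_of_a₁_a₃_eq_zero (ha₁ : W.a₁ = 0) (ha₃ : W.a₃ = 0) (x y : F) : W.negY x y = -y := by
  simp [negY, ha₁, ha₃]

lemma addX_self_of_a₁_eq_zero (ha₁ : W.a₁ = 0) (x ℓ : F) :
    W.addX x x ℓ = ℓ ^ 2 + (-W.a₂ - 2 * x) := by
  rw [addX, ha₁]; ring

lemma addY_self_of_a₁_a₃_eq_zero (ha₁ : W.a₁ = 0) (ha₃ : W.a₃ = 0) (x y ℓ : F) :
    W.addY x x y ℓ = -(ℓ * (W.addX x x ℓ - x) + y) := by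
  rw [addY, negAddY, negY_of_a₁_a₃_eq_zero ha₁ ha₃]

lemma ne_negY_of_a₁_a₃_eq_zero (ha₁ : W.a₁ = 0) (ha₃ : W.a₃ = 0) {x y : F} (hy : 2 * y ≠ 0) :
    y ≠ W.negY x y := by
  rw [negY_of_a₁_a₃_eq_zero ha₁ ha₃]; intro h; apply hy; linear_combination h

variable [DecidableEq F]

lemma slope_self_of_a₁_a₃_eq_zero (ha₁ : W.a₁ = 0) (ha₃ : W.a₃ = 0) {x y : F} (hy : 2 * y ≠ 0) :
    W.slope x x y y = (3 * x ^ 2 + 2 * W.a₂ * x + W.a₄) / (2 * y) := by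
  rw [slope_of_Y_ne rfl (ne_negY_of_a₁_a₃_eq_zero ha₁ ha₃ hy), negY_of_a₁_a₃_eq_zero ha₁ ha₃, ha₁]
  ring_nf

variable (W) in
noncomputable def double (p : F × F) : F × F :=
  (W.addX p.1 p.1 (W.slope p.1 p.1 p.2 p.2), W.addY p.1 p.1 p.2 (W.slope p.1 p.1 p.2 p.2))

lemma equation_double {p : F × F} (h : W.Equation p.1 p.2) (hy : p.2 ≠ W.negY p.1 p.2) :
    W.Equation (W.double p).1 (W.double p).2 :=
  equation_add h h fun hxy => hy hxy.2

section AbsoluteValue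

variable {v : AbsoluteValue F ℝ} (hv : IsNonarchimedean v) (ha₁ : W.a₁ = 0) (ha₃ : W.a₃ = 0)
  (ha₂ : v W.a₂ ≤ 1) (ha₄ : v W.a₄ ≤ 1) (h2_pos : 0 < v 2) (h2_lt_one : v 2 < 1)
include hv ha₁ ha₃ ha₂ ha₄ h2_pos h2_lt_one

lemma abv_slope_self {t : ℝ} (ht : 1 < t) {x y : F} (hx : v x = t ^ 2) (hy : v y = t ^ 3) :
    v (W.slope x x y y) = t / v 2 := by
  have v3 : v 3 = 1 := by
    rw [show (3 : F) = 1 + 2 by norm_num, hv.add_eq_left_of_lt (by simpa using h2_lt_one), map_one]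
  have h2y : 2 * y ≠ 0 := v.pos_iff.mp (by rw [map_mul, hy]; positivity)
  have v3x : v (3 * x ^ 2) = t ^ 4 := by simp [v3, hx]; ring
  have : v (2 * W.a₂ * x + W.a₄) < v (3 * x ^ 2) := calc
    v (2 * W.a₂ * x + W.a₄) ≤ max (v W.a₂ * (v 2 * t ^ 2)) (v W.a₄) := by
      rw [← hx, ← map_mul, ← map_mul, show W.a₂ * (2 * x) = 2 * W.a₂ * x by ring]; exact hv _ _
    _ < t ^ 4 := by
      have : t ^ 2 < t ^ 4 := pow_lt_pow_right₀ ht (by norm_num)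
      have : v W.a₂ * (v 2 * t ^ 2) ≤ t ^ 2 := by
        nlinarith [mul_le_mul_of_nonneg_right ha₂ (by positivity : 0 ≤ v 2 * t ^ 2)]
      exact max_lt (by linarith) (by linarith [one_lt_pow₀ ht (n := 4) (by norm_num)])
    _ = v (3 * x ^ 2) := v3x.symm
  rw [slope_self_of_a₁_a₃_eq_zero ha₁ ha₃ h2y, map_div₀, add_assoc, hv.add_eq_left_of_lt this,
    v3x, map_mul, hy]
  field_simp

theorem abv_double {t : ℝ} (ht : 1 < t) {p : F × F} (hx : v p.1 = t ^ 2) (hy : v p.2 = t ^ 3) :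
    v (W.double p).1 = (t / v 2) ^ 2 ∧ v (W.double p).2 = (t / v 2) ^ 3 := by
  obtain ⟨x, y⟩ := p
  set u := t / v 2
  have htu : t < u := by rw [lt_div_iff₀ h2_pos]; nlinarith
  have htu2 : t ^ 2 < u ^ 2 := by gcongr
  set ℓ := W.slope x x y y
  have vℓ : v ℓ = u := abv_slope_self hv ha₁ ha₃ ha₂ ha₄ h2_pos h2_lt_one ht hx hy
  have vx' : v (W.addX x x ℓ) = u ^ 2 := by
    have : v (-W.a₂ - 2 * x) < v (ℓ ^ 2) := calc
      v (-W.a₂ - 2 * x) ≤ max (v (-W.a₂)) (v (-(2 * x))) := by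
        rw [sub_eq_add_neg]; exact hv _ _
      _ = max (v W.a₂) (v 2 * t ^ 2) := by rw [map_neg_eq_map, map_neg_eq_map, map_mul, hx]
      _ < u ^ 2 := max_lt (by nlinarith) (by nlinarith)
      _ = v (ℓ ^ 2) := by rw [map_pow, vℓ]
    rw [addX_self_of_a₁_eq_zero ha₁, hv.add_eq_left_of_lt this, map_pow, vℓ]
  have vxx : v (W.addX x x ℓ - x) = u ^ 2 := by
    have : v (-x) < v (W.addX x x ℓ) := by rw [map_neg_eq_map, hx, vx']; exact htu2
    rw [sub_eq_add_neg, hv.add_eq_left_of_lt this, vx']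
  have vℓxx : v (ℓ * (W.addX x x ℓ - x)) = u ^ 3 := by rw [map_mul, vℓ, vxx]; ring
  have : v y < v (ℓ * (W.addX x x ℓ - x)) := by
    rw [vℓxx, hy]; exact pow_lt_pow_left₀ htu (by linarith) (by norm_num)
  refine ⟨vx', ?_⟩
  change v (W.addY x x y ℓ) = u ^ 3
  rw [addY_self_of_a₁_a₃_eq_zero ha₁ ha₃, map_neg_eq_map, hv.add_eq_left_of_lt this, vℓxx]

theorem abv_iterate_double {t : ℝ} (ht : 1 < t) {p : F × F} (hx : v p.1 = t ^ 2)
    (hy : v p.2 = t ^ 3) (n : ℕ) :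
    v (W.double^[n] p).1 = (t / v 2 ^ n) ^ 2 ∧ v (W.double^[n] p).2 = (t / v 2 ^ n) ^ 3 := by
  induction n with
  | zero => simpa using ⟨hx, hy⟩
  | succ n ih =>
    have htn : 1 < t / v 2 ^ n :=
      ht.trans_le (le_div_self (by linarith) (by positivity) (pow_le_one₀ h2_pos.le h2_lt_one.le))
    rw [Function.iterate_succ_apply', pow_succ (v 2) n, ← div_div]
    exact abv_double hv ha₁ ha₃ ha₂ ha₄ h2_pos h2_lt_one htn ih.1 ih.2

theorem setOf_equation_infinite {t : ℝ} (ht : 1 < t) {p : F × F} (hp : W.Equation p.1 p.2)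
    (hx : v p.1 = t ^ 2) (hy : v p.2 = t ^ 3) : {q : F × F | W.Equation q.1 q.2}.Infinite := by
  have habv := abv_iterate_double hv ha₁ ha₃ ha₂ ha₄ h2_pos h2_lt_one ht hx hy
  refine Set.infinite_of_injective_forall_mem (f := fun n => W.double^[n] p) ?_ fun n => ?_
  · intro m n hmn
    have := congrArg (fun q => v q.1) hmn
    simp only [(habv m).1, (habv n).1] at this
    rw [pow_left_inj₀ (by positivity) (by positivity) two_ne_zero,
      div_eq_mul_inv, div_eq_mul_inv, mul_right_inj' (by positivity), inv_inj] at this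
    exact pow_right_injective₀ h2_pos h2_lt_one.ne this
  · induction n with
    | zero => exact hp
    | succ n ih =>
      have h2y : 2 * (W.double^[n] p).2 ≠ 0 :=
        v.pos_iff.mp (by rw [map_mul, (habv n).2]; positivity)
      rw [Function.iterate_succ_apply']
      exact equation_double ih (ne_negY_of_a₁_a₃_eq_zero ha₁ ha₃ h2y)

end AbsoluteValue

end WeierstrassCurve.Affine

namespace Rat.AbsoluteValue

lemma isNonarchimedean_padic (p : ℕ) [Fact p.Prime] : IsNonarchimedean (padic p) := fun q r => by
  simp only [padic_eq_padicNorm]; exact_mod_cast padicNorm.nonarchimedean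

lemma padic_natCast_self (p : ℕ) [Fact p.Prime] : padic p p = (p : ℝ)⁻¹ := by
  rw [padic_eq_padicNorm, padicNorm.padicNorm_p_of_prime]; simp

lemma padic_intCast_div_pow {p : ℕ} [Fact p.Prime] {m : ℤ} (hm : ¬ (p : ℤ) ∣ m) (k : ℕ) :
    padic p (m / p ^ k) = p ^ k := by
  rw [map_div₀, map_pow, padic_eq_padicNorm, padic_eq_padicNorm,
    (padicNorm.int_eq_one_iff m).mpr hm, padicNorm.padicNorm_p_of_prime]
  simp

end Rat.AbsoluteValue

open Rat.AbsoluteValue WeierstrassCurve.Affine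

theorem elliptic_curve_infinitely_many_points :
    {p : ℚ × ℚ | p.2^2 = p.1^3 - 9*p.1^2 - 36*p.1 + 324}.Infinite := by
  let W : WeierstrassCurve.Affine ℚ := ⟨0, -9, 0, -36, 324⟩
  have hW : {p : ℚ × ℚ | p.2^2 = p.1^3 - 9*p.1^2 - 36*p.1 + 324} = {q | W.Equation q.1 q.2} := by
    ext q
    simp only [Set.mem_ofPred_eq, equation_iff, W]
    constructor <;> intro h <;> linear_combination h
  have h2 : padic 2 2 = 1 / 2 := by simpa using padic_natCast_self 2
  have hx : padic 2 (265 / 16) = 4 ^ 2 := by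
    have h := padic_intCast_div_pow (p := 2) (m := 265) (by decide) 4
    norm_num at h ⊢; exact h
  have hy : padic 2 (-2717 / 64) = 4 ^ 3 := by
    have h := padic_intCast_div_pow (p := 2) (m := -2717) (by decide) 6
    norm_num at h ⊢; exact h
  rw [hW]
  exact setOf_equation_infinite (isNonarchimedean_padic 2) rfl rfl
    (by exact_mod_cast padic_le_one 2 (-9)) (by exact_mod_cast padic_le_one 2 (-36))
    (by rw [h2]; norm_num) (by rw [h2]; norm_num) (by norm_num : (1 : ℝ) < 4)
    (p := (265 / 16, -2717 / 64)) (by rw [equation_iff]; norm_num) hx hy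
end

section
/- In ℚ₃, any square root a of -5 (which exists since -5 ≡ 1 mod 3 is a square in ℤ₃) with a ≡ 2 (mod 3) satisfies: v₃(-142 + 17a) = 2 and v₃(-62 + 5a) = 0, hence v₃((-142+17a)/147) = 1 and v₃((-62+5a)/63) = -2. -/
instance : Fact (Nat.Prime 3) := ⟨by norm_num⟩

/-!
Since `(a - 2)(a + 2) = a² - 4 = -9` and `a + 2 = (a - 2) + 4` is a unit, `v₃(a - 2) = 2`.
Then `-142 + 17a = 17(a - 2) - 108` with `v₃(108) = 3`, and `-62 + 5a = 5(a - 2) - 52` with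
`v₃(52) = 0`; in both sums the two valuations differ, so the smaller one wins.
Finally `v₃(147) = 1` and `v₃(63) = 2`.
-/

theorem norm_add_eq_right_of_norm_lt {S : Type*} [SeminormedAddGroup S] [IsUltrametricDist S]
    {x y : S} (h : ‖x‖ < ‖y‖) : ‖x + y‖ = ‖y‖ := by
  rw [IsUltrametricDist.norm_add_eq_max_of_norm_ne_norm h.ne, max_eq_right h.le]

theorem norm_sub_mul_norm_two_mul_eq {K : Type*} [NormedField K] [IsUltrametricDist K] {a b : K}
    (h : ‖a - b‖ < ‖2 * b‖) : ‖a - b‖ * ‖2 * b‖ = ‖a ^ 2 - b ^ 2‖ := by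
  have hab : ‖a + b‖ = ‖2 * b‖ := by
    rw [show a + b = a - b + 2 * b by ring]
    exact norm_add_eq_right_of_norm_lt h
  rw [← hab, ← norm_mul]
  congr 1
  ring

namespace Padic

variable {p : ℕ} [Fact p.Prime]

theorem valuation_eq_of_norm_eq_zpow {x : ℚ_[p]} {n : ℤ} (h : ‖x‖ = (p : ℝ) ^ (-n)) :
    x.valuation = n := by
  have hp : (1 : ℝ) < p := mod_cast (Fact.out : p.Prime).one_lt
  have hx : x ≠ 0 := by
    rintro rfl
    rw [norm_zero] at h
    exact (zpow_pos (by linarith) _).ne' h.symm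
  rw [norm_eq_zpow_neg_valuation hx] at h
  exact neg_injective (zpow_right_injective₀ (by linarith) hp.ne' h)

theorem norm_natCast_eq_zpow {n m : ℕ} (k : ℕ) (hn : n = p ^ k * m) (hm : ¬ p ∣ m) :
    ‖(n : ℚ_[p])‖ = (p : ℝ) ^ (-(k : ℤ)) := by
  have hm' : ‖(m : ℚ_[p])‖ = 1 :=
    norm_natCast_eq_one_iff.mpr ((Nat.Prime.coprime_iff_not_dvd Fact.out).mpr hm)
  rw [hn, Nat.cast_mul, Nat.cast_pow, norm_mul, norm_p_pow, hm', mul_one]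

end Padic

open Padic

theorem norm_sub_two_eq_of_sq_eq_neg_five {a : ℚ_[3]} (ha : a ^ 2 = -5) (h : ‖a - 2‖ < 1) :
    ‖a - 2‖ = 3 ^ (-2 : ℤ) := by
  have h4 : ‖(4 : ℚ_[3])‖ = 1 := by
    simpa using norm_natCast_eq_zpow (p := 3) (n := 4) (m := 4) 0 rfl (by norm_num)
  have h9 : ‖(-9 : ℚ_[3])‖ = 3 ^ (-2 : ℤ) := by
    simpa using norm_natCast_eq_zpow (p := 3) (n := 9) (m := 1) 2 rfl (by norm_num)
  have key := norm_sub_mul_norm_two_mul_eq (a := a) (b := 2)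
  rw [show (2 : ℚ_[3]) * 2 = 4 by norm_num, h4, mul_one, ha,
    show (-5 : ℚ_[3]) - 2 ^ 2 = -9 by norm_num, h9] at key
  exact key h

theorem three_adic_valuations (a : ℚ_[3]) (ha : a^2 = -5)
    (hmod : ‖a - 2‖ ≤ (3 : ℝ)⁻¹) :
    (-142 + 17*a).valuation = 2 ∧ (-62 + 5*a).valuation = 0 ∧
    ((-142 + 17*a)/147).valuation = 1 ∧ ((-62 + 5*a)/63).valuation = -2 := by
  have h₀ := norm_sub_two_eq_of_sq_eq_neg_five ha (hmod.trans_lt (by norm_num))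
  have h₁ : ‖-142 + 17 * a‖ = 3 ^ (-2 : ℤ) := by
    have h17 : ‖(17 : ℚ_[3])‖ = 1 := by
      simpa using norm_natCast_eq_zpow (p := 3) (n := 17) (m := 17) 0 rfl (by norm_num)
    have h108 : ‖(-108 : ℚ_[3])‖ = 3 ^ (-3 : ℤ) := by
      simpa using norm_natCast_eq_zpow (p := 3) (n := 108) (m := 4) 3 rfl (by norm_num)
    rw [show -142 + 17 * a = -108 + 17 * (a - 2) by ring, norm_add_eq_right_of_norm_lt,
      norm_mul, h17, h₀, one_mul]
    rw [h108, norm_mul, h17, h₀, one_mul]; norm_num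
  have h₂ : ‖-62 + 5 * a‖ = 1 := by
    have h5 : ‖(5 : ℚ_[3])‖ = 1 := by
      simpa using norm_natCast_eq_zpow (p := 3) (n := 5) (m := 5) 0 rfl (by norm_num)
    have h52 : ‖(-52 : ℚ_[3])‖ = 1 := by
      simpa using norm_natCast_eq_zpow (p := 3) (n := 52) (m := 52) 0 rfl (by norm_num)
    rw [show -62 + 5 * a = 5 * (a - 2) + -52 by ring, norm_add_eq_right_of_norm_lt, h52]
    rw [norm_mul, h5, h₀, one_mul, h52]; norm_num
  have h147 : ‖(147 : ℚ_[3])‖ = 3 ^ (-1 : ℤ) := by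
    simpa using norm_natCast_eq_zpow (p := 3) (n := 147) (m := 49) 1 rfl (by norm_num)
  have h63 : ‖(63 : ℚ_[3])‖ = 3 ^ (-2 : ℤ) := by
    simpa using norm_natCast_eq_zpow (p := 3) (n := 63) (m := 7) 2 rfl (by norm_num)
  refine ⟨valuation_eq_of_norm_eq_zpow ?_, valuation_eq_of_norm_eq_zpow ?_,
    valuation_eq_of_norm_eq_zpow ?_, valuation_eq_of_norm_eq_zpow ?_⟩
  all_goals simp only [norm_div, h₁, h₂, h147, h63]; norm_num
end
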